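/- Let p ∈ ℕ be even with p ≥ 2. Define F : ℝ^{p+2} → ℝ by F(x, y, t₁, …, t_p) = t_p + (max(y, 0))^{p+2}. Then F is differentiable at every point a = (x, y, t₁, …, t_p) ∈ ℝ^{p+2}, and its Fréchet derivative satisfies dF(a)(X(a)) = 0 and dF(a)(Y(a)) = x^p/p! + (p+2)(max(y, 0))^{p+1} ≥ 0. -/

import Mathlib

/-!
Only the `y`-direction sees the non-smooth term `max(y,0)^{p+2}`, and that term is `C¹` with
derivative `(p+2) max(y,0)^{p+1}`. Hence `dF(a)(v) = v_{p+1} + (p+2) max(y,0)^{p+1} v_1`: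
the field `X` has no `y`- or `t_p`-component, while `Y` has `y`-component `1` and
`t_p`-component `x^p/p!`, which is nonnegative because `p` is even.
-/

/-- The filiform horizontal vector field `X = ∂_x`, viewed as a map `ℝ^{p+2} → ℝ^{p+2}`:
`X(a) = e₁`. -/
def filiformX (p : ℕ) : (Fin (p + 2) → ℝ) → (Fin (p + 2) → ℝ) :=
  fun _ i => if (i : ℕ) = 0 then 1 else 0

/-- The filiform horizontal vector field `Y = ∂_y + Σ_{k=1}^p (x^k/k!) ∂_{t_k}`, viewed
as a map `ℝ^{p+2} → ℝ^{p+2}`: `Y(a) = e₂ + Σ_{k=1}^p (a₁^k/k!) e_{2+k}`. -/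
noncomputable def filiformY (p : ℕ) : (Fin (p + 2) → ℝ) → (Fin (p + 2) → ℝ) :=
  fun a i =>
    if (i : ℕ) = 0 then 0
    else if (i : ℕ) = 1 then 1
    else (a 0) ^ ((i : ℕ) - 1) / (Nat.factorial ((i : ℕ) - 1) : ℝ)

open ContinuousLinearMap

theorem hasDerivAt_max_zero_pow {n : ℕ} (hn : n ≠ 1) (x : ℝ) :
    HasDerivAt (fun y : ℝ => max y 0 ^ n) (n * max x 0 ^ (n - 1)) x := by
  -- Away from `0` the function is locally `0 ^ n` or `y ^ n`; at `0` the derivative extends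
  -- continuously. For `n = 1` the formula would give `1 * 0 ^ 0 = 1` on `y < 0`.
  refine hasDerivAt_of_hasDerivAt_of_ne' (f := fun y : ℝ => max y 0 ^ n)
    (g := fun y : ℝ => n * max y 0 ^ (n - 1)) (x := 0) (fun y hy => ?_) (by fun_prop)
    (by fun_prop) x
  rcases hy.lt_or_gt with hneg | hpos
  · have hzero : (n : ℝ) * max y 0 ^ (n - 1) = 0 := by
      rw [max_eq_right hneg.le]
      rcases n with _ | _ | n <;> simp_all
    rw [hzero]
    refine (hasDerivAt_const y ((0 : ℝ) ^ n)).congr_of_eventuallyEq ?_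
    filter_upwards [eventually_lt_nhds hneg] with z hz
    rw [max_eq_right hz.le]
  · rw [max_eq_left hpos.le]
    refine (hasDerivAt_pow n y).congr_of_eventuallyEq ?_
    filter_upwards [eventually_gt_nhds hpos] with z hz
    rw [max_eq_left hz.le]

theorem hasFDerivAt_apply_add_max_zero_pow {m n : ℕ} (hn : n ≠ 1) (i j : Fin m)
    (a : Fin m → ℝ) :
    HasFDerivAt (fun b : Fin m → ℝ => b i + max (b j) 0 ^ n)
      ((proj i : (Fin m → ℝ) →L[ℝ] ℝ) + (n * max (a j) 0 ^ (n - 1)) • proj j) a :=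
  (hasFDerivAt_apply i a).add
    ((hasDerivAt_max_zero_pow hn (a j)).comp_hasFDerivAt (f := fun b : Fin m → ℝ => b j) a
      (hasFDerivAt_apply j a))

theorem filiformX_apply_of_ne_zero {p : ℕ} (a : Fin (p + 2) → ℝ) {i : Fin (p + 2)}
    (hi : (i : ℕ) ≠ 0) : filiformX p a i = 0 := if_neg hi

theorem filiformY_apply_of_ne_zero {p : ℕ} (a : Fin (p + 2) → ℝ) {i : Fin (p + 2)}
    (hi : (i : ℕ) ≠ 0) : filiformY p a i = a 0 ^ ((i : ℕ) - 1) / ((i : ℕ) - 1).factorial := by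
  by_cases hi1 : (i : ℕ) = 1
  · simp [filiformY, hi1]
  · simp [filiformY, hi, hi1]

/-- Let `p` be even, `p ≥ 2`, and
`F(x, y, t₁, …, t_p) = t_p + (max(y,0))^{p+2}`.  Then `F` is differentiable at every
point `a`, with `dF(a)(X(a)) = 0` and
`dF(a)(Y(a)) = x^p/p! + (p+2)(max(y,0))^{p+1} ≥ 0`. -/
theorem filiform_counterexample_derivatives (p : ℕ) (hpe : Even p)
    (F : (Fin (p + 2) → ℝ) → ℝ)
    (hF : ∀ a, F a = a ⟨p + 1, by omega⟩ + max (a 1) 0 ^ (p + 2))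
    (a : Fin (p + 2) → ℝ) :
    DifferentiableAt ℝ F a ∧
    fderiv ℝ F a (filiformX p a) = 0 ∧
    fderiv ℝ F a (filiformY p a)
      = (a 0) ^ p / (Nat.factorial p : ℝ) + (p + 2) * max (a 1) 0 ^ (p + 1) ∧
    0 ≤ (a 0) ^ p / (Nat.factorial p : ℝ) + (p + 2) * max (a 1) 0 ^ (p + 1) := by
  obtain rfl : F = fun b => b ⟨p + 1, by omega⟩ + max (b 1) 0 ^ (p + 2) := funext hF
  have hF' := hasFDerivAt_apply_add_max_zero_pow (n := p + 2) (by omega) ⟨p + 1, by omega⟩ 1 a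
  refine ⟨hF'.differentiableAt, ?_, ?_, ?_⟩
  · simp [hF'.fderiv, filiformX_apply_of_ne_zero]
  · simp [hF'.fderiv, filiformY_apply_of_ne_zero]
  · exact add_nonneg (div_nonneg (hpe.pow_nonneg _) (by positivity)) (by positivity)
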